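/- Let μ ∈ (0, 2) and define f_L(η) = μη if μη ≤ 1, f_L(η) = 1/μ + 1 − η if μη > 1, and f_{L²}(β) = μβ/2 if μβ ≤ 2, f_{L²}(β) = 1/μ + 1 − β/2 if μβ > 2, and set g(α, η) = f_{L²}(α+η) + f_L(η) − 1 for α, η ≥ 0. Then: (i) for every α with 0 ≤ α ≤ 1/μ, the supremum of g(α, η) over η ≥ 0 equals (μα + 1)/2, attained at η = 1/μ; and (ii) if moreover μ ≤ 1/2, then for every α with 1/μ ≤ α ≤ 2/μ, the supremum of g(α, η) over η ≥ 0 equals 2 − μα, attained at η = 2/μ − α. (This computes the spectrum of fractal dimensions f_R of the ratio |j|²/|j'| of Lévy random variables appearing in second-order perturbation theory.) -/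
import Mathlib


/-- The Lévy spectrum of fractal dimensions: `f_L(η) = μη` for `μη ≤ 1` and
`f_L(η) = 1/μ + 1 − η` for `μη > 1`. -/
noncomputable def levySFD (μ η : ℝ) : ℝ :=
  if μ * η ≤ 1 then μ * η else 1 / μ + 1 - η

/-- The spectrum of fractal dimensions of the square of a Lévy random variable:
`f_{L²}(β) = μβ/2` for `μβ ≤ 2` and `f_{L²}(β) = 1/μ + 1 − β/2` for `μβ > 2`. -/
noncomputable def levySqSFD (μ β : ℝ) : ℝ :=
  if μ * β ≤ 2 then μ * β / 2 else 1 / μ + 1 - β / 2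

/-- The fusion integrand for the ratio `|j|²/|j'|` of Lévy random variables:
`g(α,η) = f_{L²}(α+η) + f_L(η) − 1`. -/
noncomputable def levyRatioFusion (μ α η : ℝ) : ℝ :=
  levySqSFD μ (α + η) + levySFD μ η - 1

/-- Saddle-point evaluation of the spectrum of fractal dimensions `f_R` of the ratio
`|j|²/|j'|` of Lévy variables appearing in second-order perturbation theory:
(i) for `0 ≤ α ≤ 1/μ` the supremum of `g(α,·)` over `η ≥ 0` is `(μα+1)/2`, attained at
`η = 1/μ`; (ii) if `μ ≤ 1/2`, for `1/μ ≤ α ≤ 2/μ` the supremum is `2 − μα`, attained at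
`η = 2/μ − α`. -/
theorem levy_ratio_saddle_point (μ : ℝ) (hμ0 : 0 < μ) (hμ2 : μ < 2) :
    (∀ α : ℝ, 0 ≤ α → α ≤ 1 / μ →
        IsGreatest (levyRatioFusion μ α '' Set.Ici 0) ((μ * α + 1) / 2)
          ∧ levyRatioFusion μ α (1 / μ) = (μ * α + 1) / 2)
      ∧ (μ ≤ 1 / 2 → ∀ α : ℝ, 1 / μ ≤ α → α ≤ 2 / μ →
          IsGreatest (levyRatioFusion μ α '' Set.Ici 0) (2 - μ * α)
            ∧ levyRatioFusion μ α (2 / μ - α) = 2 - μ * α) := by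
  have hμ : μ ≠ 0 := ne_of_gt hμ0
  have hinv : μ * (1 / μ) = 1 := by field_simp
  have hinv0 : 0 < 1 / μ := by positivity
  constructor
  · intro α hα0 hα1
    have hμα : μ * α ≤ 1 := by
      nlinarith [(le_div_iff₀ hμ0).mp hα1]
    have hval : levyRatioFusion μ α (1 / μ) = (μ * α + 1) / 2 := by
      unfold levyRatioFusion levySqSFD levySFD
      rw [if_pos (by rw [mul_add, hinv]; linarith), if_pos (by rw [hinv])]
      rw [mul_add, hinv]; ring
    refine ⟨⟨⟨1 / μ, le_of_lt hinv0, hval⟩, ?_⟩, hval⟩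
    rintro x ⟨η, hη, rfl⟩
    simp only [Set.mem_Ici] at hη
    unfold levyRatioFusion levySqSFD levySFD
    split_ifs with h1 h2 h2
    · linarith
    · push_neg at h2
      nlinarith [mul_nonneg (by linarith : (0:ℝ) ≤ μ * η - 1) (by linarith : (0:ℝ) ≤ 2 - μ),
        hinv, hμ0.le]
    · push_neg at h1
      linarith
    · push_neg at h1 h2
      nlinarith [mul_nonneg (by linarith : (0:ℝ) ≤ 2 - μ) (by linarith : (0:ℝ) ≤ 1 - μ * α),
        hinv, mul_pos hμ0 (by linarith : (0:ℝ) < μ * (α + η) - 2)]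
  · intro hμhalf α hα1 hα2
    have hμα1 : 1 ≤ μ * α := by nlinarith [(div_le_iff₀ hμ0).mp hα1]
    have hμα2 : μ * α ≤ 2 := by nlinarith [(le_div_iff₀ hμ0).mp hα2]
    have hη0 : (0:ℝ) ≤ 2 / μ - α := by
      rw [sub_nonneg]; exact hα2
    have hval : levyRatioFusion μ α (2 / μ - α) = 2 - μ * α := by
      unfold levyRatioFusion levySqSFD levySFD
      have e1 : μ * (α + (2 / μ - α)) = 2 := by field_simp; ring
      have e2 : μ * (2 / μ - α) = 2 - μ * α := by
        have h22 : μ * (2 / μ) = 2 := by field_simp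
        rw [mul_sub, h22]
      rw [if_pos (by rw [e1]), if_pos (by rw [e2]; linarith), e1, e2]
      ring
    refine ⟨⟨⟨2 / μ - α, hη0, hval⟩, ?_⟩, hval⟩
    rintro x ⟨η, hη, rfl⟩
    simp only [Set.mem_Ici] at hη
    unfold levyRatioFusion levySqSFD levySFD
    split_ifs with h1 h2 h2
    · linarith
    · push_neg at h2
      nlinarith [h2, h1]
    · push_neg at h1
      nlinarith [mul_nonneg (by linarith : (0:ℝ) ≤ 1 - 2 * μ) hη,
        hinv, mul_pos hμ0 (by linarith : (0:ℝ) < μ * (α + η) - 2)]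
    · push_neg at h1 h2
      nlinarith [mul_nonneg (by linarith : (0:ℝ) ≤ 1 - 2 * μ) (by linarith : (0:ℝ) ≤ μ * α - 1),
        hinv, mul_pos hμ0 (by linarith : (0:ℝ) < μ * η - 1)]
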